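/- arXiv:2005.13408 — 4 statements merged into one kernel-verified Lean document; each statement's English description precedes it below -/
import Mathlib

section
/- Let K = ℚ(√d) ⊂ ℝ be a real quadratic number field (d > 1 squarefree) with ring of integers O and real embeddings σ₁, σ₂. There exists a constant C > 0 (depending only on K) with the following property: if (x₁,x₂) ∈ ℝ² ∖ σ(K), then there are infinitely many pairs (p,q) ∈ O × (O ∖ {0}) such that |x_i − σ_i(p)/σ_i(q)| ≤ C/(|σ_i(q)|·(|σ₁(q)| + |σ₂(q)|)) for i = 1,2. -/
open NumberField

/-- A real embedding of `K`, applied to an algebraic integer of `K`. -/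
noncomputable def embInt (K : Type) [Field K] [NumberField K] (σ : K →+* ℝ) (p : 𝓞 K) : ℝ :=
  σ (algebraMap (𝓞 K) K p)

/-- Two-dimensional Dirichlet pigeonhole. -/
lemma pigeon2 (Q : ℕ) (hQ : 0 < Q) (w₁ w₂ : Fin (Q+1) × Fin (Q+1) → ℝ) :
    ∃ s t : Fin (Q+1) × Fin (Q+1), s ≠ t ∧ ∃ a b : ℤ,
      |w₁ s - w₁ t - a| ≤ 1/Q ∧ |w₂ s - w₂ t - b| ≤ 1/Q := by
  have hQ' : (0:ℝ) < Q := by exact_mod_cast hQ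
  have hfl : ∀ u : ℝ, 0 ≤ ⌊(Q:ℝ) * Int.fract u⌋ ∧ ⌊(Q:ℝ) * Int.fract u⌋ < Q := by
    intro u
    constructor
    · exact Int.floor_nonneg.2 (mul_nonneg hQ'.le (Int.fract_nonneg u))
    · rw [Int.floor_lt]
      push_cast
      nlinarith [Int.fract_lt_one u, Int.fract_nonneg u]
  set F : Fin (Q+1) × Fin (Q+1) → Fin Q × Fin Q := fun z =>
    (⟨(⌊(Q:ℝ) * Int.fract (w₁ z)⌋).toNat, by
        have := hfl (w₁ z); omega⟩,
     ⟨(⌊(Q:ℝ) * Int.fract (w₂ z)⌋).toNat, by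
        have := hfl (w₂ z); omega⟩) with hF
  have hcard : Fintype.card (Fin Q × Fin Q) < Fintype.card (Fin (Q+1) × Fin (Q+1)) := by
    simp only [Fintype.card_prod, Fintype.card_fin]
    nlinarith
  obtain ⟨s, t, hst, heq⟩ := Fintype.exists_ne_map_eq_of_card_lt F hcard
  refine ⟨s, t, hst, ?_⟩
  have key : ∀ u v : ℝ, ⌊(Q:ℝ) * Int.fract u⌋ = ⌊(Q:ℝ) * Int.fract v⌋ →
      ∃ a : ℤ, |u - v - a| ≤ 1/Q := by
    intro u v h
    refine ⟨⌊u⌋ - ⌊v⌋, ?_⟩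
    have h1 : |(Q:ℝ) * Int.fract u - (Q:ℝ) * Int.fract v| < 1 :=
      Int.abs_sub_lt_one_of_floor_eq_floor h
    have h2 : u - v - ((⌊u⌋ - ⌊v⌋ : ℤ) : ℝ) = Int.fract u - Int.fract v := by
      rw [Int.fract, Int.fract]; push_cast; ring
    rw [h2, le_div_iff₀ hQ']
    have h3 : |Int.fract u - Int.fract v| * Q = |(Q:ℝ) * Int.fract u - (Q:ℝ) * Int.fract v| := by
      rw [show (Q:ℝ) * Int.fract u - (Q:ℝ) * Int.fract v = (Int.fract u - Int.fract v) * Q by ring,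
        abs_mul, abs_of_pos hQ']
    linarith [h3 ▸ h1.le]
  have e1 : ⌊(Q:ℝ) * Int.fract (w₁ s)⌋ = ⌊(Q:ℝ) * Int.fract (w₁ t)⌋ := by
    have := congrArg (fun z => (z.1 : Fin Q).val) heq
    simp only [hF] at this
    have hs := hfl (w₁ s); have ht := hfl (w₁ t)
    omega
  have e2 : ⌊(Q:ℝ) * Int.fract (w₂ s)⌋ = ⌊(Q:ℝ) * Int.fract (w₂ t)⌋ := by
    have := congrArg (fun z => (z.2 : Fin Q).val) heq
    simp only [hF] at this
    have hs := hfl (w₂ s); have ht := hfl (w₂ t)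
    omega
  obtain ⟨a, ha⟩ := key _ _ e1
  obtain ⟨b, hb⟩ := key _ _ e2
  exact ⟨a, b, ha, hb⟩

/-- Simultaneous approximation with linear forms in `1, t₁` resp. `1, t₂`. -/
lemma approx2 (t₁ t₂ x₁ x₂ : ℝ) (ht : t₁ ≠ t₂) (Q : ℕ) (hQ : 0 < Q) :
    ∃ a b c d : ℤ, ¬(c = 0 ∧ d = 0) ∧ |(c:ℝ)| ≤ Q ∧ |(d:ℝ)| ≤ Q ∧
      |((c:ℝ) + d*t₁)*x₁ - (a + b*t₁)| ≤ (1 + |t₁| + |t₂|)/Q ∧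
      |((c:ℝ) + d*t₂)*x₂ - (a + b*t₂)| ≤ (1 + |t₁| + |t₂|)/Q := by
  have hQ' : (0:ℝ) < Q := by exact_mod_cast hQ
  have hsub : t₂ - t₁ ≠ 0 := sub_ne_zero.2 (Ne.symm ht)
  set y₁ : Fin (Q+1) × Fin (Q+1) → ℝ := fun z => ((z.1:ℝ) + (z.2:ℝ)*t₁)*x₁ with hy₁
  set y₂ : Fin (Q+1) × Fin (Q+1) → ℝ := fun z => ((z.1:ℝ) + (z.2:ℝ)*t₂)*x₂ with hy₂
  set w₁ : Fin (Q+1) × Fin (Q+1) → ℝ := fun z => (t₂ * y₁ z - t₁ * y₂ z)/(t₂ - t₁) with hw₁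
  set w₂ : Fin (Q+1) × Fin (Q+1) → ℝ := fun z => (y₂ z - y₁ z)/(t₂ - t₁) with hw₂
  obtain ⟨s, t, hst, a, b, h1, h2⟩ := pigeon2 Q hQ w₁ w₂
  refine ⟨a, b, (s.1:ℤ) - (t.1:ℤ), (s.2:ℤ) - (t.2:ℤ), ?_, ?_, ?_, ?_, ?_⟩
  · rintro ⟨hc, hd⟩
    apply hst
    have h1 : (s.1 : ℕ) = (t.1 : ℕ) := by omega
    have h2 : (s.2 : ℕ) = (t.2 : ℕ) := by omega
    exact Prod.ext (Fin.ext h1) (Fin.ext h2)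
  · have hs1 : (s.1 : ℕ) ≤ Q := Nat.lt_succ_iff.1 s.1.isLt
    have ht1 : (t.1 : ℕ) ≤ Q := Nat.lt_succ_iff.1 t.1.isLt
    have h : |((s.1 : ℕ) : ℤ) - ((t.1 : ℕ) : ℤ)| ≤ (Q : ℤ) :=
      abs_le.2 ⟨by omega, by omega⟩
    exact_mod_cast h
  · have hs2 : (s.2 : ℕ) ≤ Q := Nat.lt_succ_iff.1 s.2.isLt
    have ht2 : (t.2 : ℕ) ≤ Q := Nat.lt_succ_iff.1 t.2.isLt
    have h : |((s.2 : ℕ) : ℤ) - ((t.2 : ℕ) : ℤ)| ≤ (Q : ℤ) :=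
      abs_le.2 ⟨by omega, by omega⟩
    exact_mod_cast h
  · have e1 : ((((s.1:ℤ) - (t.1:ℤ)):ℝ) + (((s.2:ℤ) - (t.2:ℤ)):ℝ)*t₁)*x₁ - ((a:ℝ) + b*t₁)
        = (w₁ s - w₁ t - a) + t₁*(w₂ s - w₂ t - b) := by
      simp only [hw₁, hw₂, hy₁, hy₂]
      field_simp
      push_cast
      ring
    push_cast at e1 ⊢
    rw [e1]
    have hA := abs_add_le (w₁ s - w₁ t - a) (t₁*(w₂ s - w₂ t - b))
    rw [abs_mul] at hA
    have hB : |t₁| * |w₂ s - w₂ t - (b:ℝ)| ≤ |t₁| * (1/Q) :=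
      mul_le_mul_of_nonneg_left h2 (abs_nonneg _)
    have hC : (1 + |t₁| + |t₂|)/Q = 1/Q + |t₁| *(1/Q) + |t₂| *(1/Q) := by ring
    have hD : 0 ≤ |t₂| *(1/Q) := by positivity
    linarith
  · have e1 : ((((s.1:ℤ) - (t.1:ℤ)):ℝ) + (((s.2:ℤ) - (t.2:ℤ)):ℝ)*t₂)*x₂ - ((a:ℝ) + b*t₂)
        = (w₁ s - w₁ t - a) + t₂*(w₂ s - w₂ t - b) := by
      simp only [hw₁, hw₂, hy₁, hy₂]
      field_simp
      push_cast
      ring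
    push_cast at e1 ⊢
    rw [e1]
    have hA := abs_add_le (w₁ s - w₁ t - a) (t₂*(w₂ s - w₂ t - b))
    rw [abs_mul] at hA
    have hB : |t₂| * |w₂ s - w₂ t - (b:ℝ)| ≤ |t₂| * (1/Q) :=
      mul_le_mul_of_nonneg_left h2 (abs_nonneg _)
    have hC : (1 + |t₁| + |t₂|)/Q = 1/Q + |t₁| *(1/Q) + |t₂| *(1/Q) := by ring
    have hD : 0 ≤ |t₁| *(1/Q) := by positivity
    linarith

lemma exists_theta (K : Type) [Field K] [NumberField K] (σ₁ σ₂ : K →+* ℝ) (hσ : σ₁ ≠ σ₂) :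
    ∃ θ : 𝓞 K, σ₁ (algebraMap (𝓞 K) K θ) ≠ σ₂ (algebraMap (𝓞 K) K θ) := by
  by_contra h
  push_neg at h
  apply hσ
  ext γ
  obtain ⟨x, y, -, rfl⟩ := IsFractionRing.div_surjective (A := 𝓞 K) γ
  rw [map_div₀, map_div₀, h, h]

theorem stmt1 (K : Type) [Field K] [NumberField K]
    (hdeg : Module.finrank ℚ K = 2)
    (σ₁ σ₂ : K →+* ℝ) (hσ : σ₁ ≠ σ₂) :
    ∃ C : ℝ, 0 < C ∧ ∀ x₁ x₂ : ℝ,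
      (x₁, x₂) ∉ {x : ℝ × ℝ | ∃ γ : K, x = (σ₁ γ, σ₂ γ)} →
      {pq : 𝓞 K × 𝓞 K | pq.2 ≠ 0 ∧
        |x₁ - embInt K σ₁ pq.1 / embInt K σ₁ pq.2| ≤
          C / (|embInt K σ₁ pq.2| * (|embInt K σ₁ pq.2| + |embInt K σ₂ pq.2|)) ∧
        |x₂ - embInt K σ₂ pq.1 / embInt K σ₂ pq.2| ≤
          C / (|embInt K σ₂ pq.2| * (|embInt K σ₁ pq.2| + |embInt K σ₂ pq.2|))}.Infinite := by
  obtain ⟨θ, hθ⟩ := exists_theta K σ₁ σ₂ hσ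
  set t₁ := σ₁ (algebraMap (𝓞 K) K θ) with ht₁
  set t₂ := σ₂ (algebraMap (𝓞 K) K θ) with ht₂
  set c₀ : ℝ := 1 + |t₁| + |t₂| with hc₀
  have hc₀pos : (0:ℝ) < c₀ := by positivity
  refine ⟨2*c₀*c₀, by positivity, ?_⟩
  intro x₁ x₂ hx
  set E₁ : 𝓞 K → ℝ := embInt K σ₁ with hE₁
  set E₂ : 𝓞 K → ℝ := embInt K σ₂ with hE₂
  set S : Set (𝓞 K × 𝓞 K) := {pq : 𝓞 K × 𝓞 K | pq.2 ≠ 0 ∧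
        |x₁ - E₁ pq.1 / E₁ pq.2| ≤
          2*c₀*c₀ / (|E₁ pq.2| * (|E₁ pq.2| + |E₂ pq.2|)) ∧
        |x₂ - E₂ pq.1 / E₂ pq.2| ≤
          2*c₀*c₀ / (|E₂ pq.2| * (|E₁ pq.2| + |E₂ pq.2|))} with hS
  show S.Infinite
  have hemb1 : ∀ a b : ℤ, E₁ ((a : 𝓞 K) + (b : 𝓞 K)*θ) = (a:ℝ) + (b:ℝ)*t₁ := by
    intro a b
    simp [hE₁, embInt, ht₁, map_add, map_mul, map_intCast]
  have hemb2 : ∀ a b : ℤ, E₂ ((a : 𝓞 K) + (b : 𝓞 K)*θ) = (a:ℝ) + (b:ℝ)*t₂ := by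
    intro a b
    simp [hE₂, embInt, ht₂, map_add, map_mul, map_intCast]
  have hEne : ∀ q : 𝓞 K, q ≠ 0 → E₁ q ≠ 0 ∧ E₂ q ≠ 0 := by
    intro q hq
    have hK : algebraMap (𝓞 K) K q ≠ 0 := by
      simpa using (map_ne_zero_iff _ (IsFractionRing.injective (𝓞 K) K)).2 hq
    exact ⟨(map_ne_zero σ₁).2 hK, (map_ne_zero σ₂).2 hK⟩
  -- Construction of good pairs for every Q
  have hcon : ∀ Q : ℕ, 0 < Q → ∃ pq : 𝓞 K × 𝓞 K, pq ∈ S ∧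
      |x₁ * E₁ pq.2 - E₁ pq.1| ≤ c₀/Q ∧ |x₂ * E₂ pq.2 - E₂ pq.1| ≤ c₀/Q := by
    intro Q hQ
    have hQ' : (0:ℝ) < Q := by exact_mod_cast hQ
    obtain ⟨a, b, c, d, hne, hcQ, hdQ, h1, h2⟩ := approx2 t₁ t₂ x₁ x₂ hθ Q hQ
    set p : 𝓞 K := (a : 𝓞 K) + (b : 𝓞 K)*θ with hp
    set q : 𝓞 K := (c : 𝓞 K) + (d : 𝓞 K)*θ with hqdef
    have hq0 : q ≠ 0 := by
      intro h0
      have hz1 : (c:ℝ) + (d:ℝ)*t₁ = 0 := by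
        have h : E₁ q = 0 := by rw [h0]; simp [hE₁, embInt]
        rwa [hqdef, hemb1] at h
      have hz2 : (c:ℝ) + (d:ℝ)*t₂ = 0 := by
        have h : E₂ q = 0 := by rw [h0]; simp [hE₂, embInt]
        rwa [hqdef, hemb2] at h
      have hd0 : (d:ℝ) = 0 := by
        by_contra hd
        apply hθ
        have h3 : (d:ℝ) * t₁ = (d:ℝ) * t₂ := by linarith
        exact mul_left_cancel₀ hd h3
      have hc0 : (c:ℝ) = 0 := by rw [hd0] at hz1; linarith
      exact hne ⟨by exact_mod_cast hc0, by exact_mod_cast hd0⟩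
    obtain ⟨hq1, hq2⟩ := hEne q hq0
    have hq1' : 0 < |E₁ q| := abs_pos.2 hq1
    have hq2' : 0 < |E₂ q| := abs_pos.2 hq2
    have hr1 : |x₁ * E₁ q - E₁ p| ≤ c₀/Q := by
      rw [hemb1, hemb1]
      calc |x₁ * ((c:ℝ) + (d:ℝ)*t₁) - ((a:ℝ) + (b:ℝ)*t₁)|
          = |((c:ℝ) + (d:ℝ)*t₁)*x₁ - ((a:ℝ) + (b:ℝ)*t₁)| := by ring_nf
        _ ≤ c₀/Q := h1
    have hr2 : |x₂ * E₂ q - E₂ p| ≤ c₀/Q := by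
      rw [hemb2, hemb2]
      calc |x₂ * ((c:ℝ) + (d:ℝ)*t₂) - ((a:ℝ) + (b:ℝ)*t₂)|
          = |((c:ℝ) + (d:ℝ)*t₂)*x₂ - ((a:ℝ) + (b:ℝ)*t₂)| := by ring_nf
        _ ≤ c₀/Q := h2
    -- size bound on the denominators
    have hs1 : |E₁ q| ≤ c₀ * Q := by
      rw [hemb1]
      calc |(c:ℝ) + (d:ℝ)*t₁| ≤ |(c:ℝ)| + |(d:ℝ)| * |t₁| := by
            refine (abs_add_le _ _).trans ?_
            rw [abs_mul]
        _ ≤ Q + Q*|t₁| := by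
            have := abs_nonneg t₁
            have h := mul_le_mul_of_nonneg_right hdQ (abs_nonneg t₁)
            linarith
        _ ≤ c₀ * Q := by rw [hc₀]; nlinarith [abs_nonneg t₁, abs_nonneg t₂]
    have hs2 : |E₂ q| ≤ c₀ * Q := by
      rw [hemb2]
      calc |(c:ℝ) + (d:ℝ)*t₂| ≤ |(c:ℝ)| + |(d:ℝ)| * |t₂| := by
            refine (abs_add_le _ _).trans ?_
            rw [abs_mul]
        _ ≤ Q + Q*|t₂| := by
            have := abs_nonneg t₂
            have h := mul_le_mul_of_nonneg_right hdQ (abs_nonneg t₂)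
            linarith
        _ ≤ c₀ * Q := by rw [hc₀]; nlinarith [abs_nonneg t₁, abs_nonneg t₂]
    have hsum : |E₁ q| + |E₂ q| ≤ 2*c₀*Q := by linarith
    have hsumpos : 0 < |E₁ q| + |E₂ q| := by linarith
    refine ⟨(p, q), ⟨hq0, ?_, ?_⟩, hr1, hr2⟩
    · have key : |x₁ - E₁ p / E₁ q| = |x₁ * E₁ q - E₁ p| / |E₁ q| := by
        rw [← abs_div]
        congr 1
        field_simp
      rw [key]
      calc |x₁ * E₁ q - E₁ p| / |E₁ q| ≤ (c₀/Q) / |E₁ q| := by gcongr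
        _ = (2*c₀*c₀) / (|E₁ q| * (2*c₀*Q)) := by field_simp
        _ ≤ (2*c₀*c₀) / (|E₁ q| * (|E₁ q| + |E₂ q|)) := by
            apply div_le_div_of_nonneg_left (by positivity) (by positivity) ?_
            exact mul_le_mul_of_nonneg_left hsum hq1'.le
    · have key : |x₂ - E₂ p / E₂ q| = |x₂ * E₂ q - E₂ p| / |E₂ q| := by
        rw [← abs_div]
        congr 1
        field_simp
      rw [key]
      calc |x₂ * E₂ q - E₂ p| / |E₂ q| ≤ (c₀/Q) / |E₂ q| := by gcongr
        _ = (2*c₀*c₀) / (|E₂ q| * (2*c₀*Q)) := by field_simp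
        _ ≤ (2*c₀*c₀) / (|E₂ q| * (|E₁ q| + |E₂ q|)) := by
            apply div_le_div_of_nonneg_left (by positivity) (by positivity) ?_
            exact mul_le_mul_of_nonneg_left hsum hq2'.le
  -- residual function
  set e : 𝓞 K × 𝓞 K → ℝ := fun pq => |x₁ * E₁ pq.2 - E₁ pq.1| + |x₂ * E₂ pq.2 - E₂ pq.1| with he
  have hpos : ∀ pq ∈ S, 0 < e pq := by
    rintro ⟨p, q⟩ hpq
    obtain ⟨hq0, -, -⟩ := hpq
    obtain ⟨hq1, hq2⟩ := hEne q hq0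
    rcases lt_or_ge 0 (e (p, q)) with h | h
    · exact h
    exfalso
    have ha1 : |x₁ * E₁ q - E₁ p| = 0 := by
      have := abs_nonneg (x₁ * E₁ q - E₁ p)
      have := abs_nonneg (x₂ * E₂ q - E₂ p)
      simp only [he] at h
      linarith
    have ha2 : |x₂ * E₂ q - E₂ p| = 0 := by
      have := abs_nonneg (x₁ * E₁ q - E₁ p)
      have := abs_nonneg (x₂ * E₂ q - E₂ p)
      simp only [he] at h
      linarith
    apply hx
    refine ⟨algebraMap (𝓞 K) K p / algebraMap (𝓞 K) K q, ?_⟩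
    have hKq : algebraMap (𝓞 K) K q ≠ 0 :=
      (map_ne_zero_iff _ (IsFractionRing.injective (𝓞 K) K)).2 hq0
    have hx1 : x₁ = E₁ p / E₁ q := by
      have := abs_eq_zero.1 ha1
      field_simp
      linarith
    have hx2 : x₂ = E₂ p / E₂ q := by
      have := abs_eq_zero.1 ha2
      field_simp
      linarith
    simp only [Set.mem_setOf_eq, map_div₀]
    exact Prod.ext hx1 hx2
  -- infinitude
  by_contra hfin
  rw [Set.not_infinite] at hfin
  have hne : S.Nonempty := by
    obtain ⟨pq, hpq, -⟩ := hcon 1 one_pos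
    exact ⟨pq, hpq⟩
  obtain ⟨pq₀, hpq₀, hmin⟩ := Set.exists_min_image S e hfin hne
  have he₀ : 0 < e pq₀ := hpos pq₀ hpq₀
  obtain ⟨Q, hQgt⟩ := exists_nat_gt (2*c₀ / e pq₀)
  have hQpos : 0 < Q := by
    by_contra hq
    push_neg at hq
    interval_cases Q
    · simp only [Nat.cast_zero] at hQgt
      have hdp : 0 < 2*c₀ / e pq₀ := div_pos (by positivity) he₀
      linarith
  have hQ' : (0:ℝ) < Q := by exact_mod_cast hQpos
  obtain ⟨pq, hpq, hr1, hr2⟩ := hcon Q hQpos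
  have hlt : e pq < e pq₀ := by
    have h1 : e pq ≤ 2*c₀/Q := by
      simp only [he]
      have : c₀/Q + c₀/Q = 2*c₀/Q := by ring
      linarith
    have h2 : 2*c₀/Q < e pq₀ := by
      rw [div_lt_iff₀ hQ']
      rw [div_lt_iff₀ he₀] at hQgt
      nlinarith
    exact lt_of_le_of_lt h1 h2
  exact absurd (hmin pq hpq) (not_le.2 hlt)
end

section
/- Let K be a real quadratic number field with ring of integers O and real embeddings σ₁, σ₂, and set Ñ(q) = σ₁(q)² + σ₂(q)² for q ∈ O. There exists a constant c > 0 depending only on K such that for every nonzero principal ideal 𝔞 of O, Σ_{q ∈ O, (q) = 𝔞} 1/Ñ(q) ≤ c/N(𝔞), where the sum runs over all generators q of 𝔞. -/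
/-! If `q` generates `𝔞`, put `x = |σ₁ q|`, `y = |σ₂ q|`, so `x y = N(𝔞)`, and let `k = ⌊log₂ (x / y)⌋`.
Since `x² + y² ≥ x y · max (x / y) (y / x)`, the term of `q` is at most `2 / N(𝔞) · 2 ^ (-|k|)`.
Two generators with the same `k` differ by a unit whose conjugates are both at most `2` in
absolute value, and there are only finitely many, say `M`, such algebraic integers. Hence the sum is
at most `2 M / N(𝔞) · ∑_{k ∈ ℤ} 2 ^ (-|k|)`. -/

open NumberField

open Finset

lemma one_div_sq_add_sq_le {x y : ℝ} (hx : 0 < x) (hy : 0 < y) :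
    1 / (x ^ 2 + y ^ 2) ≤ 2 / (x * y) * (1 / 2) ^ (Int.log 2 (x / y)).natAbs := by
  set k := Int.log 2 (x / y)
  have hlo : (2 : ℝ) ^ k ≤ x / y := by
    exact_mod_cast Int.zpow_log_le_self one_lt_two (div_pos hx hy)
  have hhi : x / y < 2 * 2 ^ k := by
    have := Int.lt_zpow_succ_log_self (R := ℝ) one_lt_two (x / y)
    rwa [Nat.cast_ofNat, zpow_add_one₀ two_ne_zero, mul_comm] at this
  suffices x * y ≤ 2 * ((x ^ 2 + y ^ 2) * (1 / 2) ^ k.natAbs) by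
    rw [div_mul_eq_mul_div, div_le_div_iff₀ (by positivity) (by positivity)]
    linarith
  rcases le_or_gt 0 k with hk | hk
  · have hpow : ((1 : ℝ) / 2) ^ k.natAbs = (2 ^ k)⁻¹ := by
      rw [one_div, inv_pow, ← zpow_natCast, Int.natAbs_of_nonneg hk]
    rw [le_div_iff₀ hy] at hlo
    rw [hpow]
    field_simp
    nlinarith [sq_nonneg y]
  · have hpow : ((1 : ℝ) / 2) ^ k.natAbs = 2 ^ k := by
      rw [one_div, inv_pow, ← zpow_natCast, ← zpow_neg, Int.ofNat_natAbs_of_nonpos hk.le, neg_neg]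
    rw [div_lt_iff₀ hy] at hhi
    rw [hpow]
    nlinarith [sq_nonneg x]

lemma lt_two_mul_of_log_eq {a b : ℝ} (ha : 0 < a) (h : Int.log 2 a = Int.log 2 b) :
    b < 2 * a := by
  have hlo : (2 : ℝ) ^ Int.log 2 a ≤ a := by exact_mod_cast Int.zpow_log_le_self one_lt_two ha
  have hhi := Int.lt_zpow_succ_log_self (R := ℝ) one_lt_two b
  rw [Nat.cast_ofNat, ← h, zpow_add_one₀ two_ne_zero] at hhi
  linarith

lemma lt_two_mul_of_div_lt_of_mul_eq {x y x' y' : ℝ} (hx : 0 < x) (hy : 0 < y) (hx' : 0 < x')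
    (hy' : 0 < y') (hprod : x' * y' = x * y) (hr : x' / y' < 2 * (x / y))
    (hr' : x / y < 2 * (x' / y')) : x' < 2 * x ∧ y' < 2 * y := by
  rw [← mul_div_assoc, div_lt_div_iff₀ hy' hy] at hr
  rw [← mul_div_assoc, div_lt_div_iff₀ hy hy'] at hr'
  have hx2 : x' ^ 2 * y < 2 * x ^ 2 * y := by nlinarith
  have hy2 : y' ^ 2 * x < 2 * y ^ 2 * x := by nlinarith
  constructor
  · nlinarith [lt_of_mul_lt_mul_right hx2 hy.le]
  · nlinarith [lt_of_mul_lt_mul_right hy2 hx.le]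

lemma sum_comp_le_mul_tsum {ι β : Type*} [DecidableEq β] (s : Finset ι) (f : ι → β)
    {g : β → ℝ} (hg : 0 ≤ g) (hsum : Summable g) {m : ℕ}
    (hfiber : ∀ j, #{i ∈ s | f i = j} ≤ m) :
    ∑ i ∈ s, g (f i) ≤ m * ∑' j, g j := by
  rw [sum_comp]
  calc ∑ j ∈ s.image f, #{i ∈ s | f i = j} • g j
      ≤ ∑ j ∈ s.image f, m * g j := by
        gcongr with j
        rw [nsmul_eq_mul]
        gcongr
        · exact hg j
        · exact_mod_cast hfiber j
    _ = m * ∑ j ∈ s.image f, g j := (mul_sum _ _ _).symm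
    _ ≤ m * ∑' j, g j := by gcongr; exact hsum.sum_le_tsum _ fun j _ => hg j

lemma summable_half_pow_natAbs : Summable fun j : ℤ => ((1 : ℝ) / 2) ^ j.natAbs :=
  summable_int_iff_summable_nat_and_neg.mpr
    ⟨by simpa using summable_geometric_two, by simpa using summable_geometric_two⟩

lemma ne_zero_of_span_singleton_eq {R : Type*} [CommSemiring R] {𝔞 : Ideal R} {q : R}
    (h𝔞 : 𝔞 ≠ ⊥) (hq : Ideal.span {q} = 𝔞) : q ≠ 0 := by
  rintro rfl
  exact h𝔞 (by simpa using hq.symm)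

lemma ofRealHom_comp_injective {R : Type*} [Semiring R] :
    Function.Injective (Complex.ofRealHom.comp : (R →+* ℝ) → R →+* ℂ) := fun _ _ h =>
  RingHom.ext fun x => Complex.ofReal_injective (RingHom.congr_fun h x)

lemma isIntegral_div_of_span_eq {K : Type} [Field K] {q q' : 𝓞 K} (hq : q ≠ 0)
    (hspan : Ideal.span {q} = Ideal.span {q'}) : IsIntegral ℤ ((q' : K) / q) := by
  obtain ⟨u, rfl⟩ := Ideal.span_singleton_eq_span_singleton.mp hspan
  push_cast
  rw [mul_div_cancel_left₀ _ (RingOfIntegers.coe_ne_zero_iff.mpr hq)]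
  exact RingOfIntegers.isIntegral_coe _

section RealQuadratic

variable {K : Type} [Field K] [NumberField K] {σ₁ σ₂ : K →+* ℝ}

open scoped Classical in
lemma univ_eq_pair_of_finrank_eq_two (hdeg : Module.finrank ℚ K = 2) (hσ : σ₁ ≠ σ₂) :
    (univ : Finset (K →+* ℂ)) = {Complex.ofRealHom.comp σ₁, Complex.ofRealHom.comp σ₂} := by
  refine (eq_univ_of_card _ ?_).symm
  rw [card_pair (ofRealHom_comp_injective.ne hσ), Embeddings.card K ℂ, hdeg]

lemma eq_or_eq_of_finrank_eq_two (hdeg : Module.finrank ℚ K = 2) (hσ : σ₁ ≠ σ₂)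
    (φ : K →+* ℂ) : φ = Complex.ofRealHom.comp σ₁ ∨ φ = Complex.ofRealHom.comp σ₂ := by
  classical
  have hφ := mem_univ φ
  rw [univ_eq_pair_of_finrank_eq_two hdeg hσ] at hφ
  simpa using hφ

lemma abs_norm_eq_mul_abs (hdeg : Module.finrank ℚ K = 2) (hσ : σ₁ ≠ σ₂) (x : K) :
    |(Algebra.norm ℚ x : ℝ)| = |σ₁ x| * |σ₂ x| := by
  classical
  have hprod : (Algebra.norm ℚ x : ℂ) = ∏ φ : K →+* ℂ, φ x := by
    rw [← eq_ratCast (algebraMap ℚ ℂ), Algebra.norm_eq_prod_embeddings]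
    exact Fintype.prod_equiv (RingHom.equivRatAlgHom K ℂ).symm _ _ fun _ => rfl
  rw [univ_eq_pair_of_finrank_eq_two hdeg hσ, prod_pair (ofRealHom_comp_injective.ne hσ)] at hprod
  simpa only [norm_mul, RingHom.comp_apply, Complex.ofRealHom_eq_coe, Complex.norm_real,
    Complex.norm_ratCast, Real.norm_eq_abs] using congrArg norm hprod

lemma absNorm_span_singleton_eq_mul_abs (hdeg : Module.finrank ℚ K = 2) (hσ : σ₁ ≠ σ₂)
    (q : 𝓞 K) :
    (Ideal.absNorm (Ideal.span {q}) : ℝ) = |embInt K σ₁ q| * |embInt K σ₂ q| := by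
  rw [embInt, embInt, ← abs_norm_eq_mul_abs hdeg hσ, Ideal.absNorm_span_singleton,
    ← Algebra.coe_norm_int, Nat.cast_natAbs]
  push_cast
  rfl

lemma embInt_ne_zero (σ : K →+* ℝ) {q : 𝓞 K} (hq : q ≠ 0) : embInt K σ q ≠ 0 :=
  (map_ne_zero σ).mpr (RingOfIntegers.coe_ne_zero_iff.mpr hq)

variable (σ₁ σ₂) in
noncomputable def dyadicLogRatio (q : 𝓞 K) : ℤ :=
  Int.log 2 (|embInt K σ₁ q| / |embInt K σ₂ q|)

lemma one_div_embInt_sq_add_sq_le (hdeg : Module.finrank ℚ K = 2) (hσ : σ₁ ≠ σ₂) {q : 𝓞 K}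
    (hq : q ≠ 0) :
    1 / (embInt K σ₁ q ^ 2 + embInt K σ₂ q ^ 2) ≤
      2 / (Ideal.absNorm (Ideal.span {q}) : ℝ) * (1 / 2) ^ (dyadicLogRatio σ₁ σ₂ q).natAbs := by
  rw [absNorm_span_singleton_eq_mul_abs hdeg hσ, ← sq_abs, ← sq_abs (embInt K σ₂ q)]
  exact one_div_sq_add_sq_le (abs_pos.mpr (embInt_ne_zero σ₁ hq))
    (abs_pos.mpr (embInt_ne_zero σ₂ hq))

lemma norm_div_le_two_of_dyadicLogRatio_eq (hdeg : Module.finrank ℚ K = 2) (hσ : σ₁ ≠ σ₂)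
    {q q' : 𝓞 K} (hq : q ≠ 0) (hq' : q' ≠ 0) (hspan : Ideal.span {q} = Ideal.span {q'})
    (hlog : dyadicLogRatio σ₁ σ₂ q = dyadicLogRatio σ₁ σ₂ q') (φ : K →+* ℂ) :
    ‖φ ((q' : K) / q)‖ ≤ 2 := by
  have hpos (σ : K →+* ℝ) {p : 𝓞 K} (hp : p ≠ 0) : 0 < |embInt K σ p| :=
    abs_pos.mpr (embInt_ne_zero σ hp)
  have hprod : |embInt K σ₁ q'| * |embInt K σ₂ q'| = |embInt K σ₁ q| * |embInt K σ₂ q| := by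
    rw [← absNorm_span_singleton_eq_mul_abs hdeg hσ, ← absNorm_span_singleton_eq_mul_abs hdeg hσ,
      hspan]
  obtain ⟨h₁, h₂⟩ := lt_two_mul_of_div_lt_of_mul_eq (hpos σ₁ hq) (hpos σ₂ hq) (hpos σ₁ hq')
    (hpos σ₂ hq') hprod (lt_two_mul_of_log_eq (div_pos (hpos σ₁ hq) (hpos σ₂ hq)) hlog)
    (lt_two_mul_of_log_eq (div_pos (hpos σ₁ hq') (hpos σ₂ hq')) hlog.symm)
  rcases eq_or_eq_of_finrank_eq_two hdeg hσ φ with rfl | rfl <;>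
  · rw [RingHom.comp_apply, map_div₀, Complex.ofRealHom_eq_coe,
      Complex.norm_real, Real.norm_eq_abs, abs_div]
    exact (div_le_iff₀ (hpos _ hq)).mpr (le_of_lt ‹_›)

lemma card_filter_dyadicLogRatio_le (hdeg : Module.finrank ℚ K = 2) (hσ : σ₁ ≠ σ₂)
    {𝔞 : Ideal (𝓞 K)} (h𝔞 : 𝔞 ≠ ⊥) (s : Finset {q : 𝓞 K // Ideal.span {q} = 𝔞}) (j : ℤ) :
    #{q ∈ s | dyadicLogRatio σ₁ σ₂ q.1 = j} ≤
      {x : K | IsIntegral ℤ x ∧ ∀ φ : K →+* ℂ, ‖φ x‖ ≤ 2}.ncard := by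
  have hne (q : {q : 𝓞 K // Ideal.span {q} = 𝔞}) : (q : 𝓞 K) ≠ 0 :=
    ne_zero_of_span_singleton_eq h𝔞 q.2
  rcases {q ∈ s | dyadicLogRatio σ₁ σ₂ q.1 = j}.eq_empty_or_nonempty with hempty | ⟨q₀, hq₀⟩
  · simp [hempty]
  rw [← Set.ncard_coe_finset]
  refine Set.ncard_le_ncard_of_injOn (fun q => (q.1 : K) / q₀.1) (fun q hq => ⟨?_, ?_⟩) ?_
    (Embeddings.finite_of_norm_le K ℂ 2)
  · exact isIntegral_div_of_span_eq (hne q₀) (q₀.2.trans q.2.symm)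
  · exact norm_div_le_two_of_dyadicLogRatio_eq hdeg hσ (hne q₀) (hne q) (q₀.2.trans q.2.symm)
      ((mem_filter.mp hq₀).2.trans (mem_filter.mp hq).2.symm)
  · intro q _ q' _ h
    exact Subtype.ext (RingOfIntegers.coe_injective
      ((div_left_inj' (RingOfIntegers.coe_ne_zero_iff.mpr (hne q₀))).mp h))

end RealQuadratic

theorem stmt7 (K : Type) [Field K] [NumberField K]
    (hdeg : Module.finrank ℚ K = 2)
    (σ₁ σ₂ : K →+* ℝ) (hσ : σ₁ ≠ σ₂) :
    ∃ c : ℝ, 0 < c ∧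
      ∀ 𝔞 : Ideal (𝓞 K), 𝔞 ≠ ⊥ → Submodule.IsPrincipal 𝔞 →
        ∑' q : {q : 𝓞 K // Ideal.span {q} = 𝔞},
            1 / (embInt K σ₁ q ^ 2 + embInt K σ₂ q ^ 2) ≤
          c / (Ideal.absNorm 𝔞 : ℝ) := by
  set M := {x : K | IsIntegral ℤ x ∧ ∀ φ : K →+* ℂ, ‖φ x‖ ≤ 2}.ncard
  set C := ∑' j : ℤ, ((1 : ℝ) / 2) ^ j.natAbs
  have hM : 0 < M := (Set.ncard_pos (Embeddings.finite_of_norm_le K ℂ 2)).mpr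
    ⟨1, isIntegral_one, fun φ => by simp⟩
  have hC : 0 < C := summable_half_pow_natAbs.tsum_pos (fun _ => by positivity) 0 (by simp)
  refine ⟨2 * M * C, by positivity, fun 𝔞 h𝔞 _ => ?_⟩
  refine tsum_le_of_sum_le' (by positivity) fun s => ?_
  calc ∑ q ∈ s, 1 / (embInt K σ₁ q ^ 2 + embInt K σ₂ q ^ 2)
      ≤ ∑ q ∈ s, 2 / (Ideal.absNorm 𝔞 : ℝ) * (1 / 2) ^ (dyadicLogRatio σ₁ σ₂ q).natAbs :=
        sum_le_sum fun q _ => by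
          simpa only [q.2] using
            one_div_embInt_sq_add_sq_le hdeg hσ (ne_zero_of_span_singleton_eq h𝔞 q.2)
    _ = 2 / (Ideal.absNorm 𝔞 : ℝ) * ∑ q ∈ s, (1 / 2) ^ (dyadicLogRatio σ₁ σ₂ q).natAbs :=
        (mul_sum _ _ _).symm
    _ ≤ 2 / (Ideal.absNorm 𝔞 : ℝ) * (M * C) := by
        gcongr
        exact sum_comp_le_mul_tsum s _ (fun _ => by positivity) summable_half_pow_natAbs
          (card_filter_dyadicLogRatio_le hdeg hσ h𝔞 s)
    _ = 2 * M * C / (Ideal.absNorm 𝔞 : ℝ) := by ring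
end

section
/- Let d > 1 be an integer which is not a perfect square. Then there exist positive constants c₁, c₂, c₃ depending only on d such that the following holds: if Q is a positive integer and x is an integer with x² ≡ d (mod Q), then there exist u, r ∈ ℤ with gcd(u,r) = 1, c₁·√Q ≤ |r| ≤ c₂·√Q, and |x/Q − u/r| ≤ c₃/r². -/
/-!
Dirichlet's theorem gives a reduced fraction `u / r` with `r ≤ √Q` and
`|x / Q - u / r| < 1 / (√Q r)`, so `t = r x - u Q` satisfies `t² < Q`. Since `x² ≡ d (mod Q)`,
also `t² ≡ d r² (mod Q)`, and `t² - d r² ≠ 0` because `d` is not a square. Being a nonzero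
multiple of `Q` below `Q`, it is at most `-Q`, hence `Q ≤ d r²`, i.e. `r ≥ √(Q / d)`.
-/

theorem Int.sq_sub_mul_sq_ne_zero {d : ℤ} (hd : ¬IsSquare d) (t : ℤ) {r : ℤ} (hr : r ≠ 0) :
    t ^ 2 - d * r ^ 2 ≠ 0 := by
  intro h
  apply hd
  rw [← Rat.isSquare_intCast_iff]
  refine ⟨(t : ℚ) / r, ?_⟩
  have hr' : (r : ℚ) ≠ 0 := by exact_mod_cast hr
  have h' : (t : ℚ) ^ 2 = d * r ^ 2 := by exact_mod_cast sub_eq_zero.mp h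
  field_simp
  linear_combination -h'

theorem Int.le_mul_sq_of_dvd_sq_sub_mul_sq {d Q t r : ℤ} (hd₀ : 0 ≤ d) (hd : ¬IsSquare d)
    (hr : r ≠ 0) (hQ : Q ∣ t ^ 2 - d * r ^ 2) (ht : t ^ 2 < Q) : Q ≤ d * r ^ 2 := by
  have hne := Int.sq_sub_mul_sq_ne_zero hd t hr
  have hle : Q ≤ |t ^ 2 - d * r ^ 2| := Int.le_of_dvd (abs_pos.mpr hne) ((dvd_abs _ _).mpr hQ)
  have hdr : 0 ≤ d * r ^ 2 := by positivity
  rcases abs_cases (t ^ 2 - d * r ^ 2) with ⟨habs, _⟩ | ⟨habs, _⟩ <;> nlinarith [sq_nonneg t]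

theorem Int.dvd_sq_mul_sub_sub_mul_sq {Q x d : ℤ} (h : Q ∣ x ^ 2 - d) (u r : ℤ) :
    Q ∣ (r * x - u * Q) ^ 2 - d * r ^ 2 := by
  have hexp : (r * x - u * Q) ^ 2 - d * r ^ 2 = r ^ 2 * (x ^ 2 - d) + Q * (u ^ 2 * Q - 2 * r * x * u) := by
    ring
  rw [hexp]
  exact dvd_add (h.mul_left _) (dvd_mul_right _ _)

theorem Real.exists_rat_abs_sub_lt_and_den_le_sqrt (ξ : ℝ) {Q : ℕ} (hQ : 0 < Q) :
    ∃ q : ℚ, (q.den : ℝ) ≤ √Q ∧ |ξ - q| < 1 / (√Q * q.den) := by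
  obtain ⟨q, happrox, hden⟩ := Real.exists_rat_abs_sub_le_and_den_le ξ (Nat.sqrt_pos.mpr hQ)
  have hden' : (q.den : ℝ) ≤ Q.sqrt := by exact_mod_cast hden
  refine ⟨q, hden'.trans Real.nat_sqrt_le_real_sqrt, happrox.trans_lt ?_⟩
  have hsqrt : 0 < √(Q : ℝ) := Real.sqrt_pos.mpr (by exact_mod_cast hQ)
  gcongr
  exact Real.real_sqrt_lt_nat_sqrt_succ

theorem Real.sq_mul_sub_mul_lt_of_abs_div_sub_div_lt {x u r Q : ℝ} (hQ : 0 < Q) (hr : 0 < r)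
    (h : |x / Q - u / r| < 1 / (√Q * r)) : (r * x - u * Q) ^ 2 < Q := by
  have hsqrt : 0 < √Q := Real.sqrt_pos.mpr hQ
  have heq : r * x - u * Q = Q * r * (x / Q - u / r) := by field_simp
  have habs : |r * x - u * Q| < √Q := by
    rw [heq, abs_mul, abs_of_pos (by positivity)]
    calc Q * r * |x / Q - u / r| < Q * r * (1 / (√Q * r)) := by gcongr
      _ = √Q := by field_simp; rw [Real.sq_sqrt hQ.le]
  simpa [Real.sq_sqrt hQ.le] using sq_lt_sq' (abs_lt.mp habs).1 (abs_lt.mp habs).2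

theorem stmt13 (d : ℤ) (hd : 1 < d) (hns : ¬IsSquare d) :
    ∃ c₁ c₂ c₃ : ℝ, 0 < c₁ ∧ 0 < c₂ ∧ 0 < c₃ ∧
      ∀ (Q : ℕ), 0 < Q → ∀ x : ℤ, (Q : ℤ) ∣ x ^ 2 - d →
        ∃ u r : ℤ, Int.gcd u r = 1 ∧
          c₁ * Real.sqrt Q ≤ |(r : ℝ)| ∧ |(r : ℝ)| ≤ c₂ * Real.sqrt Q ∧
          |(x : ℝ) / (Q : ℝ) - (u : ℝ) / (r : ℝ)| ≤ c₃ / (r : ℝ) ^ 2 := by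
  have hd₀ : (0 : ℝ) < d := by exact_mod_cast one_pos.trans hd
  refine ⟨(√d)⁻¹, 1, 1, by positivity, one_pos, one_pos, fun Q hQ x hx => ?_⟩
  have hQ' : (0 : ℝ) < Q := by exact_mod_cast hQ
  obtain ⟨q, hden, happrox⟩ := Real.exists_rat_abs_sub_lt_and_den_le_sqrt ((x : ℝ) / Q) hQ
  have hr : (0 : ℝ) < q.den := by exact_mod_cast q.den_pos
  rw [Rat.cast_def] at happrox
  have ht : (q.den * x - q.num * Q : ℤ) ^ 2 < (Q : ℤ) := by
    exact_mod_cast Real.sq_mul_sub_mul_lt_of_abs_div_sub_div_lt hQ' hr happrox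
  have hQr : (Q : ℝ) ≤ d * q.den ^ 2 := by
    exact_mod_cast Int.le_mul_sq_of_dvd_sq_sub_mul_sq (by omega) hns (by exact_mod_cast q.den_ne_zero)
      (Int.dvd_sq_mul_sub_sub_mul_sq hx q.num q.den) ht
  refine ⟨q.num, q.den, q.reduced, ?_, ?_, ?_⟩
  · rw [Int.cast_natCast, abs_of_pos hr, inv_mul_le_iff₀ (Real.sqrt_pos.mpr hd₀)]
    calc √(Q : ℝ) ≤ √(d * q.den ^ 2) := Real.sqrt_le_sqrt hQr
      _ = √d * q.den := by rw [Real.sqrt_mul hd₀.le, Real.sqrt_sq hr.le]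
  · simpa [abs_of_pos hr] using hden
  · calc |(x : ℝ) / Q - q.num / (q.den : ℤ)| ≤ 1 / (√Q * q.den) := by simpa using happrox.le
      _ ≤ 1 / (q.den : ℝ) ^ 2 := by rw [sq]; gcongr
end

section
/- Let d > 1 be an integer which is not a perfect square. There exists a constant c > 0 depending only on d such that the following holds: for all integers a', b', all natural numbers W', and all real X ≥ 1, if gcd(b', W') = 1 and (a')² ≡ (b')²·d (mod W'), then the number of pairs (A, B) ∈ ℤ² with |A| ≤ X, |B| ≤ X and b'·B ≡ a'·A (mod W') is at most c·(X²/W' + 1)·(log 2W')². -/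
/-!
The pairs `(A, B)` with `W' ∣ b' B - a' A` form a lattice `L`. Since `b'` is invertible mod `W'` and
`a'² ≡ b'² d`, every `(u, v) ∈ L` satisfies `W' ∣ v² - d u²`, and `v² - d u²` vanishes only at `0`
because `d` is not a square. Hence every nonzero vector of `L` has sup-norm at least `m + 1`, where
`(1 + |d|) m² < W' ≤ (1 + |d|) (m + 1)²`, so each box of side `m + 1` contains at most one point of `L`
and `[-X, X]²` contains at most `(2X / (m + 1) + 2)² ≤ 8 (1 + |d|) (X² / W' + 1)` of them.
The factor `log (2 W')² ≥ log 2²` is then only absorbed into the constant.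
-/

theorem eq_zero_of_sq_sub_mul_sq_eq_zero {d u v : ℤ} (hd : ¬IsSquare d)
    (h : v ^ 2 - d * u ^ 2 = 0) : u = 0 ∧ v = 0 := by
  have hnorm : (⟨v, u⟩ : ℤ√d).norm = 0 := by
    rw [Zsqrtd.norm_def]; linear_combination h
  have := (Zsqrtd.norm_eq_zero (fun n hn => hd ⟨n, hn⟩) _).1 hnorm
  simp_all [Zsqrtd.ext_iff]

theorem dvd_sq_sub_mul_sq_of_dvd {W a b d u v : ℤ} (hab : W ∣ a ^ 2 - b ^ 2 * d)
    (hbW : IsCoprime b W) (huv : W ∣ b * v - a * u) : W ∣ v ^ 2 - d * u ^ 2 := by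
  have key : W ∣ b ^ 2 * (v ^ 2 - d * u ^ 2) := by
    have e : b ^ 2 * (v ^ 2 - d * u ^ 2) =
        (b * v - a * u) * (b * v + a * u) + u ^ 2 * (a ^ 2 - b ^ 2 * d) := by ring
    rw [e]
    exact dvd_add (huv.mul_right _) (hab.mul_left _)
  exact hbW.pow_left.symm.dvd_of_dvd_mul_left key

theorem eq_zero_of_dvd_of_sq_add_abs_mul_sq_lt {W a b d u v : ℤ} (hd : ¬IsSquare d)
    (hab : W ∣ a ^ 2 - b ^ 2 * d) (hbW : IsCoprime b W) (huv : W ∣ b * v - a * u)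
    (hsmall : v ^ 2 + |d| * u ^ 2 < W) : u = 0 ∧ v = 0 := by
  by_contra hne
  have hQ : v ^ 2 - d * u ^ 2 ≠ 0 := fun h => hne (eq_zero_of_sq_sub_mul_sq_eq_zero hd h)
  have hW : W ≤ |v ^ 2 - d * u ^ 2| :=
    Int.le_of_dvd (abs_pos.2 hQ) ((dvd_abs _ _).2 (dvd_sq_sub_mul_sq_of_dvd hab hbW huv))
  have hle : |v ^ 2 - d * u ^ 2| ≤ v ^ 2 + |d| * u ^ 2 := by
    calc |v ^ 2 - d * u ^ 2| ≤ |v ^ 2| + |d * u ^ 2| := abs_sub _ _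
      _ = v ^ 2 + |d| * u ^ 2 := by rw [abs_mul, abs_sq, abs_sq]
  omega

theorem eq_of_dvd_of_abs_sub_le {W a b d m : ℤ} (hd : ¬IsSquare d)
    (hab : W ∣ a ^ 2 - b ^ 2 * d) (hbW : IsCoprime b W) (hm : (1 + |d|) * m ^ 2 < W)
    {p q : ℤ × ℤ} (hp : W ∣ b * p.2 - a * p.1) (hq : W ∣ b * q.2 - a * q.1)
    (h1 : |p.1 - q.1| ≤ m) (h2 : |p.2 - q.2| ≤ m) : p = q := by
  have hdiff : W ∣ b * (p.2 - q.2) - a * (p.1 - q.1) := by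
    rw [show b * (p.2 - q.2) - a * (p.1 - q.1) = (b * p.2 - a * p.1) - (b * q.2 - a * q.1) by
      ring]
    exact dvd_sub hp hq
  have hsq (x : ℤ) (hx : |x| ≤ m) : x ^ 2 ≤ m ^ 2 := by
    rw [← sq_abs x]; exact pow_le_pow_left₀ (abs_nonneg x) hx 2
  have hsmall : (p.2 - q.2) ^ 2 + |d| * (p.1 - q.1) ^ 2 < W := by
    nlinarith [hsq _ h1, hsq _ h2, abs_nonneg d]
  obtain ⟨e1, e2⟩ := eq_zero_of_dvd_of_sq_add_abs_mul_sq_lt hd hab hbW hdiff hsmall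
  exact Prod.ext (sub_eq_zero.1 e1) (sub_eq_zero.1 e2)

theorem Nat.exists_mul_sq_lt_le_mul_succ_sq {D W : ℕ} (hD : 0 < D) (hW : 0 < W) :
    ∃ m : ℕ, D * m ^ 2 < W ∧ W ≤ D * (m + 1) ^ 2 := by
  refine ⟨Nat.sqrt ((W - 1) / D), ?_, ?_⟩
  · have := (Nat.le_div_iff_mul_le hD).1 (Nat.sqrt_le' ((W - 1) / D))
    rw [mul_comm]; omega
  · have := (Nat.div_lt_iff_lt_mul hD).1 (Nat.lt_succ_sqrt' ((W - 1) / D))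
    rw [Nat.succ_eq_add_one] at this
    rw [mul_comm]; omega

theorem card_Icc_floor_neg_floor_le {t : ℝ} (ht : 0 ≤ t) :
    ((Finset.Icc ⌊-t⌋ ⌊t⌋).card : ℝ) ≤ 2 * t + 2 := by
  have hlo : -t - 1 < ⌊-t⌋ := by have := Int.lt_floor_add_one (-t); linarith
  have hhi : (⌊t⌋ : ℝ) ≤ t := Int.floor_le t
  have hnn : 0 ≤ ⌊t⌋ + 1 - ⌊-t⌋ := by
    have : ⌊-t⌋ ≤ ⌊t⌋ := Int.floor_mono (by linarith)
    omega
  rw [Int.card_Icc, ← Int.cast_natCast, Int.toNat_of_nonneg hnn]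
  push_cast
  linarith

theorem card_box_le_of_separated {S : Set (ℤ × ℤ)} {n : ℕ} (hn : 0 < n)
    (hS : ∀ p ∈ S, ∀ q ∈ S, |p.1 - q.1| < n → |p.2 - q.2| < n → p = q) {X : ℝ} (hX : 0 ≤ X) :
    (Nat.card {p : ℤ × ℤ // |(p.1 : ℝ)| ≤ X ∧ |(p.2 : ℝ)| ≤ X ∧ p ∈ S} : ℝ) ≤
      (2 * (X / n) + 2) ^ 2 := by
  have hnR : (0 : ℝ) < n := Nat.cast_pos.2 hn
  set I := Finset.Icc ⌊-(X / n)⌋ ⌊X / n⌋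
  have hmem (A : ℤ) (hA : |(A : ℝ)| ≤ X) : ⌊(A : ℝ) / n⌋ ∈ I := by
    rw [abs_le] at hA
    exact Finset.mem_Icc.2 ⟨Int.floor_mono (by rw [← neg_div]; gcongr; exact hA.1),
      Int.floor_mono (by gcongr; exact hA.2)⟩
  have hclose (A B : ℤ) (h : ⌊(A : ℝ) / n⌋ = ⌊(B : ℝ) / n⌋) : |A - B| < n := by
    have := Int.abs_sub_lt_one_of_floor_eq_floor h
    rw [← sub_div, abs_div, abs_of_pos hnR, div_lt_one hnR] at this
    exact_mod_cast this
  let f : {p : ℤ × ℤ // |(p.1 : ℝ)| ≤ X ∧ |(p.2 : ℝ)| ≤ X ∧ p ∈ S} → I ×ˢ I := fun p =>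
    ⟨(⌊(p.1.1 : ℝ) / n⌋, ⌊(p.1.2 : ℝ) / n⌋), Finset.mem_product.2 ⟨hmem _ p.2.1, hmem _ p.2.2.1⟩⟩
  have hf : Function.Injective f := by
    rintro ⟨p, _, _, hp⟩ ⟨q, _, _, hq⟩ hpq
    simp only [f, Subtype.mk.injEq, Prod.mk.injEq] at hpq
    exact Subtype.ext (hS p hp q hq (hclose _ _ hpq.1) (hclose _ _ hpq.2))
  calc _ ≤ ((I ×ˢ I).card : ℝ) := by
        exact_mod_cast (Nat.card_le_card_of_injective f hf).trans (Nat.card_eq_finsetCard _).le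
    _ = (I.card : ℝ) ^ 2 := by rw [Finset.card_product]; push_cast; ring
    _ ≤ (2 * (X / n) + 2) ^ 2 := by gcongr; exact card_Icc_floor_neg_floor_le (by positivity)

theorem stmt16_general (d : ℤ) (hns : ¬IsSquare d) :
    ∃ c : ℝ, 0 < c ∧
      ∀ (a' b' : ℤ) (W' : ℕ) (X : ℝ), 0 < W' → 1 ≤ X →
        Int.gcd b' (W' : ℤ) = 1 → (W' : ℤ) ∣ a' ^ 2 - b' ^ 2 * d →
        (Nat.card {AB : ℤ × ℤ // |(AB.1 : ℝ)| ≤ X ∧ |(AB.2 : ℝ)| ≤ X ∧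
            (W' : ℤ) ∣ b' * AB.2 - a' * AB.1} : ℝ) ≤
          c * (X ^ 2 / (W' : ℝ) + 1) * Real.log (2 * W') ^ 2 := by
  set D : ℕ := 1 + d.natAbs
  have hlog2 : 0 < Real.log 2 := Real.log_pos one_lt_two
  refine ⟨8 * D / Real.log 2 ^ 2, by positivity, ?_⟩
  intro a' b' W' X hW hX hgcd hdvd
  obtain ⟨m, hmW, hWm⟩ := Nat.exists_mul_sq_lt_le_mul_succ_sq (by omega : 0 < D) hW
  have hmWz : (1 + |d|) * (m : ℤ) ^ 2 < W' := by
    rw [← Int.natCast_natAbs]; exact_mod_cast hmW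
  have hcount := card_box_le_of_separated (S := {AB | (W' : ℤ) ∣ b' * AB.2 - a' * AB.1})
    m.succ_pos (fun p hp q hq h1 h2 => eq_of_dvd_of_abs_sub_le hns hdvd
      (Int.isCoprime_iff_gcd_eq_one.2 hgcd) hmWz hp hq
      (by push_cast at h1; omega) (by push_cast at h2; omega)) (by linarith : 0 ≤ X)
  have hWpos : (0 : ℝ) < W' := by exact_mod_cast hW
  have hWmR : (W' : ℝ) ≤ D * (m + 1) ^ 2 := by exact_mod_cast hWm
  have hD : (1 : ℝ) ≤ D := by exact_mod_cast (by omega : 1 ≤ D)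
  have hlog : Real.log 2 ^ 2 ≤ Real.log (2 * W') ^ 2 := by
    gcongr; linarith [(Nat.one_le_cast (α := ℝ)).2 hW]
  have hXm : (X / (m + 1)) ^ 2 ≤ D * (X ^ 2 / W') := by
    rw [div_pow, ← mul_div_assoc, div_le_div_iff₀ (by positivity) hWpos]
    nlinarith [sq_nonneg X]
  calc _ ≤ (2 * (X / (m + 1 : ℕ)) + 2) ^ 2 := hcount
    _ ≤ 8 * D * (X ^ 2 / W' + 1) := by
        push_cast; nlinarith [sq_nonneg (X / (m + 1) - 1), div_nonneg (sq_nonneg X) hWpos.le]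
    _ = 8 * D / Real.log 2 ^ 2 * (X ^ 2 / W' + 1) * Real.log 2 ^ 2 := by field_simp
    _ ≤ 8 * D / Real.log 2 ^ 2 * (X ^ 2 / W' + 1) * Real.log (2 * W') ^ 2 := by gcongr

theorem stmt16 (d : ℤ) (hd : 1 < d) (hns : ¬IsSquare d) :
    ∃ c : ℝ, 0 < c ∧
      ∀ (a' b' : ℤ) (W' : ℕ) (X : ℝ), 0 < W' → 1 ≤ X →
        Int.gcd b' (W' : ℤ) = 1 → (W' : ℤ) ∣ a' ^ 2 - b' ^ 2 * d →
        (Nat.card {AB : ℤ × ℤ // |(AB.1 : ℝ)| ≤ X ∧ |(AB.2 : ℝ)| ≤ X ∧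
            (W' : ℤ) ∣ b' * AB.2 - a' * AB.1} : ℝ) ≤
          c * (X ^ 2 / (W' : ℝ) + 1) * Real.log (2 * W') ^ 2 :=
  stmt16_general d hns
end
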